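/- arXiv:math/0507158 — 5 statements merged into one kernel-verified Lean document; each statement's English description precedes it below -/
import Mathlib

section
/- Let A, B, C, D be bounded operators between appropriate Hilbert spaces such that the block operator matrix [[A, B],[C, D]] is unitary, and let Z be a bounded operator with ‖ZA‖ < 1. Define Φ(Z) := D + C (I − ZA)⁻¹ Z B. Then I − Φ(Z)Φ(Z)* = C (I − ZA)⁻¹ (I − ZZ*) (I − A*Z*)⁻¹ C*. -/
open ContinuousLinearMap

set_option maxHeartbeats 1000000 in
theorem unitary_block_defect_factorization
    {H₁ H₂ K₁ K₂ : Type*}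
    [NormedAddCommGroup H₁] [InnerProductSpace ℂ H₁] [CompleteSpace H₁]
    [NormedAddCommGroup H₂] [InnerProductSpace ℂ H₂] [CompleteSpace H₂]
    [NormedAddCommGroup K₁] [InnerProductSpace ℂ K₁] [CompleteSpace K₁]
    [NormedAddCommGroup K₂] [InnerProductSpace ℂ K₂] [CompleteSpace K₂]
    (A : H₁ →L[ℂ] K₁) (B : H₂ →L[ℂ] K₁) (C : H₁ →L[ℂ] K₂) (D : H₂ →L[ℂ] K₂)
    -- unitarity of the block operator matrix [[A, B], [C, D]] : H₁ ⊕ H₂ → K₁ ⊕ K₂,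
    -- expressed through its row and column relations:
    (h₁ : A ∘L adjoint A + B ∘L adjoint B = 1)
    (h₂ : C ∘L adjoint C + D ∘L adjoint D = 1)
    (h₃ : A ∘L adjoint C + B ∘L adjoint D = 0)
    (h₄ : adjoint A ∘L A + adjoint C ∘L C = 1)
    (h₅ : adjoint B ∘L B + adjoint D ∘L D = 1)
    (h₆ : adjoint A ∘L B + adjoint C ∘L D = 0)
    (Z : K₁ →L[ℂ] H₁) (hZA : ‖Z ∘L A‖ < 1)
    (Φ : H₂ →L[ℂ] K₂)
    (hΦ : Φ = D + C ∘L Ring.inverse (1 - Z ∘L A) ∘L Z ∘L B) :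
    1 - Φ ∘L adjoint Φ =
      C ∘L Ring.inverse (1 - Z ∘L A) ∘L (1 - Z ∘L adjoint Z) ∘L
        Ring.inverse (1 - adjoint A ∘L adjoint Z) ∘L adjoint C := by
  subst hΦ
  -- the unit
  have hu : IsUnit ((1 : H₁ →L[ℂ] H₁) - Z ∘L A) := by
    simpa using (Units.oneSub (Z ∘L A) hZA).isUnit
  set E : H₁ →L[ℂ] H₁ := Ring.inverse (1 - Z ∘L A) with hEdef
  have hE1 : ((1 : H₁ →L[ℂ] H₁) - Z ∘L A) * E = 1 := Ring.mul_inverse_cancel _ hu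
  have hE2 : E * ((1 : H₁ →L[ℂ] H₁) - Z ∘L A) = 1 := Ring.inverse_mul_cancel _ hu
  have hstar1 : ((1 : H₁ →L[ℂ] H₁) - adjoint A ∘L adjoint Z) = star (1 - Z ∘L A) := by
    simp [star_sub, star_eq_adjoint, adjoint_comp]
  have hFdef : Ring.inverse ((1 : H₁ →L[ℂ] H₁) - adjoint A ∘L adjoint Z) = star E := by
    rw [hstar1, Ring.inverse_star, hEdef]
  have hsa : star (Z ∘L A) = adjoint A ∘L adjoint Z := by
    rw [star_eq_adjoint, adjoint_comp]
  have hE' : E = 1 + E * (Z ∘L A) := by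
    have h : E - E * (Z ∘L A) = 1 := by
      calc E - E * (Z ∘L A) = E * (1 - Z ∘L A) := by noncomm_ring
        _ = 1 := hE2
    rw [← sub_eq_iff_eq_add] ; exact h
  have hF' : star E = 1 + (adjoint A ∘L adjoint Z) * star E := by
    have h := congrArg star hE2
    rw [star_mul, star_sub, star_one, hsa] at h
    have h2 : star E - (adjoint A ∘L adjoint Z) * star E = 1 := by
      calc star E - (adjoint A ∘L adjoint Z) * star E
          = (1 - adjoint A ∘L adjoint Z) * star E := by noncomm_ring
        _ = 1 := h
    rw [← sub_eq_iff_eq_add]; exact h2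
  have key : E * star E = 1 + (adjoint A ∘L adjoint Z) * star E + E * (Z ∘L A)
      + E * ((Z ∘L A) * ((adjoint A ∘L adjoint Z) * star E)) := by
    obtain ⟨F, hFeq⟩ : ∃ F, star E = F := ⟨_, rfl⟩
    rw [hFeq] at hF' ⊢
    conv_lhs => rw [hE']
    conv_lhs => rw [hF']
    noncomm_ring
  -- relations from unitarity
  have hDD : D ∘L adjoint D = 1 - C ∘L adjoint C := eq_sub_of_add_eq' h₂
  have hBB : B ∘L adjoint B = 1 - A ∘L adjoint A := eq_sub_of_add_eq' h₁
  have hBD : B ∘L adjoint D = -(A ∘L adjoint C) := eq_neg_of_add_eq_zero_right h₃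
  have hDB : D ∘L adjoint B = -(C ∘L adjoint A) := by
    have h := congrArg adjoint h₃
    rw [map_add, map_zero, adjoint_comp, adjoint_comp, adjoint_adjoint, adjoint_adjoint] at h
    exact eq_neg_of_add_eq_zero_right h
  rw [hFdef]
  simp only [map_add, adjoint_comp, ← star_eq_adjoint, comp_add, add_comp, comp_sub, sub_comp,
    one_def, id_comp, comp_id, comp_assoc, neg_comp, comp_neg]
  have hDBx : ∀ x : K₂ →L[ℂ] K₁, D ∘L (adjoint B ∘L x) = -(C ∘L (adjoint A ∘L x)) := by
    intro x
    rw [← comp_assoc, hDB, neg_comp, comp_assoc]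
  have hBBx : ∀ x : K₂ →L[ℂ] K₁, B ∘L (adjoint B ∘L x) = x - A ∘L (adjoint A ∘L x) := by
    intro x
    rw [← comp_assoc, hBB, sub_comp, one_def, id_comp, comp_assoc]
  have key2 : C ∘L (E ∘L ((star E) ∘L adjoint C)) =
      C ∘L adjoint C
      + C ∘L (adjoint A ∘L (adjoint Z ∘L (star E ∘L adjoint C)))
      + C ∘L (E ∘L (Z ∘L (A ∘L adjoint C)))
      + C ∘L (E ∘L (Z ∘L (A ∘L (adjoint A ∘L (adjoint Z ∘L (star E ∘L adjoint C)))))) := by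
    have h := congrArg (fun g : H₁ →L[ℂ] H₁ => C ∘L g ∘L adjoint C) key
    simpa only [mul_def, comp_assoc, comp_add, add_comp, one_def, id_comp, comp_id] using h
  rw [hDD]
  simp only [hDBx, hBBx, hBD, comp_neg, neg_comp, comp_sub, sub_comp, comp_add, add_comp,
    one_def, id_comp, comp_id, comp_assoc]
  rw [key2]
  abel
end

section
/- Let [[A,B],[C,D]] be a unitary block operator matrix and Z a strict contraction with ‖ZA‖ < 1. Then Φ(Z) := D + C(I − ZA)⁻¹ZB is a contraction, i.e., ‖Φ(Z)‖ ≤ 1. -/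
open ContinuousLinearMap
open scoped ComplexInnerProductSpace

/-!
By the row relations, `[[A†, C†], [B†, D†]] : K₁ ⊕ K₂ → H₁ ⊕ H₂` is an isometry, and `Φ†` is the
closed loop obtained by feeding `v = Z† w` back into it: for `w = (I - A† Z†)⁻¹ C† y` one has
`A† v + C† y = w` and `B† v + D† y = Φ† y`, hence
`‖w‖² + ‖Φ† y‖² = ‖Z† w‖² + ‖y‖² ≤ ‖w‖² + ‖y‖²`.
-/

theorem adjoint_ring_inverse_one_sub_apply {H : Type*} [NormedAddCommGroup H]
    [InnerProductSpace ℂ H] [CompleteSpace H] {E : H →L[ℂ] H} (hE : ‖E‖ < 1) (x : H) :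
    adjoint (Ring.inverse (1 - E)) x = adjoint E (adjoint (Ring.inverse (1 - E)) x) + x := by
  have hunit : IsUnit (1 - E) := by simpa using (Units.oneSub E hE).isUnit
  have hinv : adjoint (1 - E) ∘L adjoint (Ring.inverse (1 - E)) = 1 := by
    rw [← adjoint_comp, ← mul_def, Ring.inverse_mul_cancel _ hunit, adjoint_one]
  have := congr($hinv x)
  rw [map_sub, adjoint_one, comp_apply, sub_apply, one_apply_eq_self, one_apply_eq_self] at this
  exact eq_add_of_sub_eq' this

section BlockOperator

variable {H₁ H₂ K₁ K₂ : Type*}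
  [NormedAddCommGroup H₁] [InnerProductSpace ℂ H₁] [CompleteSpace H₁]
  [NormedAddCommGroup H₂] [InnerProductSpace ℂ H₂] [CompleteSpace H₂]
  [NormedAddCommGroup K₁] [InnerProductSpace ℂ K₁] [CompleteSpace K₁]
  [NormedAddCommGroup K₂] [InnerProductSpace ℂ K₂] [CompleteSpace K₂]
  {A : H₁ →L[ℂ] K₁} {B : H₂ →L[ℂ] K₁} {C : H₁ →L[ℂ] K₂} {D : H₂ →L[ℂ] K₂}

theorem norm_sq_block_adjoint_add
    (h₁ : A ∘L adjoint A + B ∘L adjoint B = 1)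
    (h₂ : C ∘L adjoint C + D ∘L adjoint D = 1)
    (h₃ : A ∘L adjoint C + B ∘L adjoint D = 0) (v : K₁) (y : K₂) :
    ‖adjoint A v + adjoint C y‖ ^ 2 + ‖adjoint B v + adjoint D y‖ ^ 2 = ‖v‖ ^ 2 + ‖y‖ ^ 2 := by
  have hv : A (adjoint A v) + B (adjoint B v) = v := by simpa using congr($h₁ v)
  have hy : C (adjoint C y) + D (adjoint D y) = y := by simpa using congr($h₂ y)
  have hvy : A (adjoint C y) + B (adjoint D y) = 0 := by simpa using congr($h₃ y)
  have hyv : C (adjoint A v) + D (adjoint B v) = 0 := by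
    simpa [adjoint_comp] using congr(adjoint $h₃ v)
  have key : ⟪adjoint A v + adjoint C y, adjoint A v + adjoint C y⟫ +
      ⟪adjoint B v + adjoint D y, adjoint B v + adjoint D y⟫ = ⟪v, v⟫ + ⟪y, y⟫ :=
    calc _ = ⟪v, A (adjoint A v) + B (adjoint B v)⟫ + ⟪v, A (adjoint C y) + B (adjoint D y)⟫ +
          ⟪y, C (adjoint A v) + D (adjoint B v)⟫ + ⟪y, C (adjoint C y) + D (adjoint D y)⟫ := by
          simp only [inner_add_left, inner_add_right, adjoint_inner_left]
          ring
      _ = ⟪v, v⟫ + ⟪y, y⟫ := by simp [hv, hy, hvy, hyv]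
  simp only [inner_self_eq_norm_sq_to_K] at key
  exact_mod_cast key

theorem norm_adjoint_feedback_le
    (h₁ : A ∘L adjoint A + B ∘L adjoint B = 1)
    (h₂ : C ∘L adjoint C + D ∘L adjoint D = 1)
    (h₃ : A ∘L adjoint C + B ∘L adjoint D = 0)
    {Z : K₁ →L[ℂ] H₁} (hZ : ‖Z‖ ≤ 1) {w : H₁} {y : K₂}
    (hw : w = adjoint A (adjoint Z w) + adjoint C y) :
    ‖adjoint B (adjoint Z w) + adjoint D y‖ ≤ ‖y‖ := by
  have hiso := norm_sq_block_adjoint_add h₁ h₂ h₃ (adjoint Z w) y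
  rw [← hw] at hiso
  have hZw : ‖adjoint Z w‖ ≤ ‖w‖ :=
    (le_opNorm _ _).trans <| by
      rw [LinearIsometryEquiv.norm_map]
      exact mul_le_of_le_one_left (norm_nonneg _) hZ
  have hsq : ‖adjoint B (adjoint Z w) + adjoint D y‖ ^ 2 ≤ ‖y‖ ^ 2 := by
    nlinarith [pow_le_pow_left₀ (norm_nonneg _) hZw 2]
  exact (pow_le_pow_iff_left₀ (norm_nonneg _) (norm_nonneg _) two_ne_zero).mp hsq

end BlockOperator

theorem unitary_block_transform_contraction_general
    {H₁ H₂ K₁ K₂ : Type*}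
    [NormedAddCommGroup H₁] [InnerProductSpace ℂ H₁] [CompleteSpace H₁]
    [NormedAddCommGroup H₂] [InnerProductSpace ℂ H₂] [CompleteSpace H₂]
    [NormedAddCommGroup K₁] [InnerProductSpace ℂ K₁] [CompleteSpace K₁]
    [NormedAddCommGroup K₂] [InnerProductSpace ℂ K₂] [CompleteSpace K₂]
    (A : H₁ →L[ℂ] K₁) (B : H₂ →L[ℂ] K₁) (C : H₁ →L[ℂ] K₂) (D : H₂ →L[ℂ] K₂)
    -- unitarity of the block operator matrix [[A, B], [C, D]] : H₁ ⊕ H₂ → K₁ ⊕ K₂,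
    -- expressed through its row and column relations:
    (h₁ : A ∘L adjoint A + B ∘L adjoint B = 1)
    (h₂ : C ∘L adjoint C + D ∘L adjoint D = 1)
    (h₃ : A ∘L adjoint C + B ∘L adjoint D = 0)
    (Z : K₁ →L[ℂ] H₁) (hZ : ‖Z‖ < 1) (hZA : ‖Z ∘L A‖ < 1)
    (Φ : H₂ →L[ℂ] K₂)
    (hΦ : Φ = D + C ∘L Ring.inverse (1 - Z ∘L A) ∘L Z ∘L B) :
    ‖Φ‖ ≤ 1 := by
  rw [← LinearIsometryEquiv.norm_map adjoint Φ]
  refine opNorm_le_bound _ zero_le_one fun y => ?_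
  rw [one_mul, hΦ]
  simp only [map_add, adjoint_comp, add_apply, comp_apply]
  rw [add_comm]
  refine norm_adjoint_feedback_le h₁ h₂ h₃ hZ.le ?_
  simpa [adjoint_comp] using adjoint_ring_inverse_one_sub_apply hZA (adjoint C y)

theorem unitary_block_transform_contraction
    {H₁ H₂ K₁ K₂ : Type*}
    [NormedAddCommGroup H₁] [InnerProductSpace ℂ H₁] [CompleteSpace H₁]
    [NormedAddCommGroup H₂] [InnerProductSpace ℂ H₂] [CompleteSpace H₂]
    [NormedAddCommGroup K₁] [InnerProductSpace ℂ K₁] [CompleteSpace K₁]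
    [NormedAddCommGroup K₂] [InnerProductSpace ℂ K₂] [CompleteSpace K₂]
    (A : H₁ →L[ℂ] K₁) (B : H₂ →L[ℂ] K₁) (C : H₁ →L[ℂ] K₂) (D : H₂ →L[ℂ] K₂)
    -- unitarity of the block operator matrix [[A, B], [C, D]] : H₁ ⊕ H₂ → K₁ ⊕ K₂,
    -- expressed through its row and column relations:
    (h₁ : A ∘L adjoint A + B ∘L adjoint B = 1)
    (h₂ : C ∘L adjoint C + D ∘L adjoint D = 1)
    (h₃ : A ∘L adjoint C + B ∘L adjoint D = 0)
    (h₄ : adjoint A ∘L A + adjoint C ∘L C = 1)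
    (h₅ : adjoint B ∘L B + adjoint D ∘L D = 1)
    (h₆ : adjoint A ∘L B + adjoint C ∘L D = 0)
    (Z : K₁ →L[ℂ] H₁) (hZ : ‖Z‖ < 1) (hZA : ‖Z ∘L A‖ < 1)
    (Φ : H₂ →L[ℂ] K₂)
    (hΦ : Φ = D + C ∘L Ring.inverse (1 - Z ∘L A) ∘L Z ∘L B) :
    ‖Φ‖ ≤ 1 :=
  unitary_block_transform_contraction_general A B C D h₁ h₂ h₃ Z hZ hZA Φ hΦ
end

section
/- Let T = [T₁,…,Tₙ] be a row contraction, Q := SOT-lim Φ_T^m(I), Y : H → K := closure(Q^{1/2}H) given by Yh := Q^{1/2}h. Then there exist bounded operators Z₁,…,Zₙ on K with Σᵢ ZᵢZᵢ* = I_K and Y* Zᵢ = Tᵢ Y* for all i. -/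
open ContinuousLinearMap Filter

/-!
As the strong limit of the iterates `Φ_T^m(I)`, `Q` is a fixed point of `Φ_T`. Since `Q = Y* Y`,
the fixed-point equation reads `Σᵢ ‖Y Tᵢ* h‖² = ‖Y h‖²`, so each `Y h ↦ Y Tᵢ* h` is contractive on
the dense range of `Y` and extends to an operator `Λᵢ` on `K`. By density `Σᵢ ‖Λᵢ k‖² = ‖k‖²`,
that is `Σᵢ Λᵢ* Λᵢ = I`, and `Zᵢ := Λᵢ*` works because `Y* Zᵢ = Tᵢ Y*` is the adjoint of
`Λᵢ Y = Y Tᵢ*`.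
-/

theorem denseRange_of_coe_apply_eq {𝕜 E F : Type*} [NontriviallyNormedField 𝕜]
    [NormedAddCommGroup E] [NormedSpace 𝕜 E] [NormedAddCommGroup F] [NormedSpace 𝕜 F]
    (R : E →L[𝕜] F) {Y : E → (LinearMap.range R.toLinearMap).topologicalClosure}
    (hY : ∀ x, (Y x : F) = R x) : DenseRange Y := by
  rw [DenseRange, Subtype.dense_iff, ← Set.range_comp]
  simp only [Function.comp_def, hY]
  exact (Submodule.topologicalClosure_coe _).subset

namespace ContinuousLinearMap

theorem isFixedPt_sum_mul_mul_of_tendsto_iterate {𝕜 E ι : Type*} [NontriviallyNormedField 𝕜]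
    [NormedAddCommGroup E] [NormedSpace 𝕜 E] [Fintype ι] (A B : ι → E →L[𝕜] E)
    {X₀ Q : E →L[𝕜] E}
    (hQ : ∀ h, Tendsto (fun m => ((fun X => ∑ i, A i * X * B i)^[m] X₀) h) atTop (nhds (Q h))) :
    Function.IsFixedPt (fun X => ∑ i, A i * X * B i) Q := by
  ext h
  have hshift := (hQ h).comp (tendsto_add_atTop_nat 1)
  simp only [Function.comp_def, Function.iterate_succ_apply', sum_apply, mul_apply_eq_comp]
    at hshift
  simp only [sum_apply, mul_apply_eq_comp]
  exact tendsto_nhds_unique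
    (tendsto_finsetSum _ fun i _ => ((A i).continuous.tendsto _).comp (hQ (B i h))) hshift

theorem sum_norm_sq_apply_adjoint_eq {𝕜 H F ι : Type*} [RCLike 𝕜] [NormedAddCommGroup H]
    [InnerProductSpace 𝕜 H] [CompleteSpace H] [NormedAddCommGroup F] [InnerProductSpace 𝕜 F]
    [CompleteSpace F] [Fintype ι] (T : ι → H →L[𝕜] H) (Y : H →L[𝕜] F)
    (hfix : ∑ i, T i * (adjoint Y ∘L Y) * adjoint (T i) = adjoint Y ∘L Y) (h : H) :
    ∑ i, ‖Y (adjoint (T i) h)‖ ^ 2 = ‖Y h‖ ^ 2 := by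
  calc ∑ i, ‖Y (adjoint (T i) h)‖ ^ 2
      = ∑ i, RCLike.re (inner 𝕜 ((T i * (adjoint Y ∘L Y) * adjoint (T i)) h) h) := by
        refine Finset.sum_congr rfl fun i _ => ?_
        rw [apply_norm_sq_eq_inner_adjoint_left, adjoint_inner_right]
        rfl
    _ = RCLike.re (inner 𝕜 ((∑ i, T i * (adjoint Y ∘L Y) * adjoint (T i)) h) h) := by
        rw [sum_apply, sum_inner, map_sum]
    _ = ‖Y h‖ ^ 2 := by rw [hfix, apply_norm_sq_eq_inner_adjoint_left]

section Complex

variable {H K ι : Type*} [NormedAddCommGroup H] [InnerProductSpace ℂ H] [CompleteSpace H]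
  [NormedAddCommGroup K] [InnerProductSpace ℂ K] [CompleteSpace K] [Fintype ι]

theorem sum_adjoint_mul_self_eq_one (Λ : ι → K →L[ℂ] K) (hΛ : ∀ x, ∑ i, ‖Λ i x‖ ^ 2 = ‖x‖ ^ 2) :
    ∑ i, adjoint (Λ i) * Λ i = 1 := by
  refine coe_injective <| (ext_inner_map _ _).mp fun x => ?_
  simp only [coe_coe, sum_apply, mul_apply_eq_comp, toLinearMap_one, Module.End.one_apply,
    sum_inner, adjoint_inner_left, inner_self_eq_norm_sq_to_K]
  exact_mod_cast hΛ x

theorem exists_cuntz_coextension_of_denseRange (T : ι → H →L[ℂ] H) {Y : H →L[ℂ] K}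
    (hY : DenseRange Y) (hnorm : ∀ h, ∑ i, ‖Y (adjoint (T i) h)‖ ^ 2 = ‖Y h‖ ^ 2) :
    ∃ Z : ι → K →L[ℂ] K,
      ∑ i, Z i * adjoint (Z i) = 1 ∧ ∀ i, adjoint Y ∘L Z i = T i ∘L adjoint Y := by
  have hle : ∀ i h, ‖Y (adjoint (T i) h)‖ ≤ 1 * ‖Y h‖ := fun i h => by
    rw [one_mul, ← pow_le_pow_iff_left₀ (norm_nonneg _) (norm_nonneg _) two_ne_zero, ← hnorm h]
    exact Finset.single_le_sum (f := fun j => ‖Y (adjoint (T j) h)‖ ^ 2)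
      (fun j _ => sq_nonneg _) (Finset.mem_univ i)
  let Λ i : K →L[ℂ] K := (Y ∘L adjoint (T i)).toLinearMap.extendOfNorm Y.toLinearMap
  have hΛY : ∀ i, Λ i ∘L Y = Y ∘L adjoint (T i) := fun i =>
    ext (LinearMap.extendOfNorm_eq hY ⟨1, hle i⟩)
  have hΛ : ∀ k, ∑ i, ‖Λ i k‖ ^ 2 = ‖k‖ ^ 2 := fun k =>
    hY.induction_on k (isClosed_eq (by fun_prop) (by fun_prop)) fun h => by
      simpa only [← comp_apply, hΛY] using hnorm h
  refine ⟨fun i => adjoint (Λ i), ?_, fun i => ?_⟩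
  · simpa only [adjoint_adjoint] using sum_adjoint_mul_self_eq_one Λ hΛ
  · rw [← adjoint_comp, hΛY, adjoint_comp, adjoint_adjoint]

end Complex

end ContinuousLinearMap

theorem cuntz_coextension_exists_general
    {H : Type*} [NormedAddCommGroup H] [InnerProductSpace ℂ H] [CompleteSpace H]
    {n : ℕ} (T : Fin n → H →L[ℂ] H)
    (Q : H →L[ℂ] H)
    (hQ : ∀ h : H, Tendsto
      (fun m => ((fun X => ∑ i, T i * X * adjoint (T i))^[m] 1) h) atTop (nhds (Q h)))
    (R : H →L[ℂ] H) (hRpos : R.IsPositive) (hRR : R * R = Q) :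
    -- `K` is the closure of the range of `Q^{1/2} = R`, and `Y h := Q^{1/2} h`
    letI K : Submodule ℂ H := (LinearMap.range R.toLinearMap).topologicalClosure
    letI : CompleteSpace K :=
      (LinearMap.range R.toLinearMap).isClosed_topologicalClosure.completeSpace_coe
    ∀ Y : H →L[ℂ] K, (∀ h : H, (Y h : H) = R h) →
      ∃ Z : Fin n → (K →L[ℂ] K),
        (∑ i, Z i * adjoint (Z i) = 1) ∧
        (∀ i, adjoint Y ∘L Z i = T i ∘L adjoint Y) := by
  intro Y hY
  have hYY : adjoint Y ∘L Y = Q := by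
    ext h : 1
    refine ext_inner_right ℂ fun g => ?_
    rw [comp_apply, adjoint_inner_left, Submodule.coe_inner, hY, hY, ← adjoint_inner_left,
      isSelfAdjoint_iff'.mp hRpos.isSelfAdjoint, ← hRR, mul_apply_eq_comp]
  have hfix := isFixedPt_sum_mul_mul_of_tendsto_iterate T (fun i => adjoint (T i)) hQ
  rw [← hYY] at hfix
  exact exists_cuntz_coextension_of_denseRange T (denseRange_of_coe_apply_eq R hY)
    (sum_norm_sq_apply_adjoint_eq T Y hfix)

theorem cuntz_coextension_exists
    {H : Type*} [NormedAddCommGroup H] [InnerProductSpace ℂ H] [CompleteSpace H]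
    {n : ℕ} (T : Fin n → H →L[ℂ] H)
    (hrow : (1 - ∑ i, T i * adjoint (T i)).IsPositive)
    (Q : H →L[ℂ] H)
    (hQ : ∀ h : H, Tendsto
      (fun m => ((fun X => ∑ i, T i * X * adjoint (T i))^[m] 1) h) atTop (nhds (Q h)))
    (R : H →L[ℂ] H) (hRpos : R.IsPositive) (hRR : R * R = Q) :
    -- `K` is the closure of the range of `Q^{1/2} = R`, and `Y h := Q^{1/2} h`
    letI K : Submodule ℂ H := (LinearMap.range R.toLinearMap).topologicalClosure
    letI : CompleteSpace K :=
      (LinearMap.range R.toLinearMap).isClosed_topologicalClosure.completeSpace_coe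
    ∀ Y : H →L[ℂ] K, (∀ h : H, (Y h : H) = R h) →
      ∃ Z : Fin n → (K →L[ℂ] K),
        (∑ i, Z i * adjoint (Z i) = 1) ∧
        (∀ i, adjoint Y ∘L Z i = T i ∘L adjoint Y) :=
  cuntz_coextension_exists_general T Q hQ R hRpos hRR
end

section
/- A row contraction T = [T₁,…,Tₙ] is pure (i.e., SOT-lim_k Σ_{|α|=k} T_α T_α* = 0) if and only if the Poisson kernel K_T : H → F²(Hₙ) ⊗ D_T, K_T h := Σ_α e_α ⊗ Δ_T T_α* h, is an isometry. -/
/-!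
Write `Q_k = Σ_{|α| = k} T_α T_α*` and `Δ² = I - Σ_i T_i T_i*`. Splitting off the last letter of
a word gives `Q_k - Q_{k+1} = Σ_{|α| = k} T_α Δ² T_α*`, so `⟨Q_k h, h⟩ - ⟨Q_{k+1} h, h⟩` is the
part `Σ_{|α| = k} ‖Δ T_α* h‖²` of `‖K_T h‖²` carried by words of length `k`. Telescoping from
`Q_0 = I` gives `⟨Q_k h, h⟩ → ‖h‖² - ‖K_T h‖²`. Finally `0 ≤ Q_k ≤ I`, hence `Q_k² ≤ Q_k` and
`‖Q_k h‖² ≤ ⟨Q_k h, h⟩`: the strong convergence `Q_k h → 0` is equivalent to the weak one.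
-/

open ContinuousLinearMap Filter

/-- For a word `α` in the free semigroup on `n` generators, `wordProd T α` is the
corresponding product `T_{i₁} ∘ ⋯ ∘ T_{i_k}` (the empty word gives the identity). -/
noncomputable def wordProd {H : Type*} [NormedAddCommGroup H] [NormedSpace ℂ H]
    {n : ℕ} (T : Fin n → H →L[ℂ] H) (α : List (Fin n)) : H →L[ℂ] H :=
  (α.map T).prod

open RCLike
open scoped InnerProductSpace

theorem lp.hasSum_sum_norm_sq_ofFn {α : Type*} [Fintype α] {E : List α → Type*}
    [∀ l, NormedAddCommGroup (E l)] (x : lp E 2) :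
    HasSum (fun k => ∑ f : Fin k → α, ‖x (List.ofFn f)‖ ^ 2) (‖x‖ ^ 2) := by
  have hx := lp.hasSum_norm (p := 2) (by norm_num) x
  simp only [ENNReal.toReal_ofNat, Real.rpow_ofNat] at hx
  exact ((List.equivSigmaTuple.symm.hasSum_iff).2 hx).sigma fun k => hasSum_fintype _

section

variable {H : Type*} [NormedAddCommGroup H] [InnerProductSpace ℂ H] [CompleteSpace H]

theorem ContinuousLinearMap.norm_apply_sq_le_re_inner {Q : H →L[ℂ] H} (h0 : 0 ≤ Q) (h1 : Q ≤ 1)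
    (x : H) : ‖Q x‖ ^ 2 ≤ re ⟪Q x, x⟫_ℂ := by
  have hQ : Q.IsPositive := (nonneg_iff_isPositive Q).1 h0
  have hsq : Q ^ 2 ≤ Q := by simpa using CStarAlgebra.pow_antitone h0 h1 one_le_two
  calc ‖Q x‖ ^ 2 = re ⟪Q (Q x), x⟫_ℂ := by
        rw [hQ.inner_left_eq_inner_right, inner_self_eq_norm_sq]
    _ ≤ re ⟪Q x, x⟫_ℂ := by
        simpa [inner_sub_left, pow_two] using ((le_def _ _).1 hsq).re_inner_nonneg_left x

theorem ContinuousLinearMap.tendsto_apply_nhds_zero_iff_re_inner {ι : Type*} {l : Filter ι}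
    {Q : ι → H →L[ℂ] H} (h0 : ∀ i, 0 ≤ Q i) (h1 : ∀ i, Q i ≤ 1) (x : H) :
    Tendsto (fun i => Q i x) l (nhds 0) ↔ Tendsto (fun i => re ⟪Q i x, x⟫_ℂ) l (nhds 0) := by
  constructor
  · intro hQ
    simpa [Function.comp_def] using
      ((continuous_re.comp (continuous_id.inner (𝕜 := ℂ) continuous_const)).tendsto 0).comp hQ
  · intro hre
    have hsq : Tendsto (fun i => ‖Q i x‖ ^ 2) l (nhds 0) :=
      squeeze_zero (fun i => by positivity) (fun i => norm_apply_sq_le_re_inner (h0 i) (h1 i) x)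
        hre
    rw [tendsto_zero_iff_norm_tendsto_zero]
    simpa using hsq.sqrt

variable {n : ℕ} (T : Fin n → H →L[ℂ] H)

omit [CompleteSpace H] in
theorem wordProd_ofFn_snoc {m : ℕ} (f : Fin m → Fin n) (i : Fin n) :
    wordProd T (List.ofFn (Fin.snoc f i)) = wordProd T (List.ofFn f) * T i := by
  simp [wordProd, List.ofFn_succ', List.prod_append, -List.ofFn_succ]

/-- The `k`-th iterate of the map `X ↦ Σ_i T_i X T_i*`. -/
noncomputable def wordConj (k : ℕ) (X : H →L[ℂ] H) : H →L[ℂ] H :=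
  ∑ f : Fin k → Fin n, wordProd T (List.ofFn f) * X * adjoint (wordProd T (List.ofFn f))

theorem wordConj_zero (X : H →L[ℂ] H) : wordConj T 0 X = X := by
  simp [wordConj, wordProd, adjoint_one]

theorem wordConj_succ (k : ℕ) (X : H →L[ℂ] H) :
    wordConj T (k + 1) X = wordConj T k (∑ i, T i * X * adjoint (T i)) := by
  rw [wordConj, ← (Fin.snocEquiv fun _ => Fin n).sum_comp, Fintype.sum_prod_type, Finset.sum_comm]
  simp only [Fin.snocEquiv, Equiv.coe_fn_mk, wordProd_ofFn_snoc, wordConj, Finset.mul_sum,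
    Finset.sum_mul, ← star_eq_adjoint, star_mul, mul_assoc]

theorem wordConj_sub (k : ℕ) (X Y : H →L[ℂ] H) :
    wordConj T k (X - Y) = wordConj T k X - wordConj T k Y := by
  simp only [wordConj, mul_sub, sub_mul, Finset.sum_sub_distrib]

theorem wordConj_mono (k : ℕ) {X Y : H →L[ℂ] H} (hXY : X ≤ Y) :
    wordConj T k X ≤ wordConj T k Y :=
  Finset.sum_le_sum fun f _ => by
    simpa only [star_eq_adjoint] using
      star_right_conjugate_le_conjugate hXY (wordProd T (List.ofFn f))

theorem wordConj_nonneg (k : ℕ) {X : H →L[ℂ] H} (hX : 0 ≤ X) : 0 ≤ wordConj T k X :=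
  Finset.sum_nonneg fun f _ => by
    simpa only [star_eq_adjoint] using star_right_conjugate_nonneg hX (wordProd T (List.ofFn f))

theorem wordConj_one_le_one (hT : ∑ i, T i * adjoint (T i) ≤ 1) (k : ℕ) : wordConj T k 1 ≤ 1 := by
  induction k with
  | zero => rw [wordConj_zero]
  | succ k ih =>
    calc wordConj T (k + 1) 1 = wordConj T k (∑ i, T i * adjoint (T i)) := by
          simp only [wordConj_succ, mul_one]
      _ ≤ wordConj T k 1 := wordConj_mono T k hT
      _ ≤ 1 := ih

variable {E : Type*} [NormedAddCommGroup E] [InnerProductSpace ℂ E] [CompleteSpace E]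

theorem re_inner_wordConj_adjoint_comp_self (k : ℕ) (A : H →L[ℂ] E) (h : H) :
    re ⟪wordConj T k (adjoint A ∘L A) h, h⟫_ℂ
      = ∑ f : Fin k → Fin n, ‖A (adjoint (wordProd T (List.ofFn f)) h)‖ ^ 2 := by
  rw [wordConj, sum_apply, sum_inner, map_sum]
  refine Finset.sum_congr rfl fun f _ => ?_
  simp only [mul_def, comp_apply]
  rw [← adjoint_inner_right, adjoint_inner_left, inner_self_eq_norm_sq]

theorem re_inner_wordConj_one_sub_succ {A : H →L[ℂ] E}
    (hA : adjoint A ∘L A = 1 - ∑ i, T i * adjoint (T i)) (k : ℕ) (h : H) :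
    re ⟪wordConj T k 1 h, h⟫_ℂ - re ⟪wordConj T (k + 1) 1 h, h⟫_ℂ
      = ∑ f : Fin k → Fin n, ‖A (adjoint (wordProd T (List.ofFn f)) h)‖ ^ 2 := by
  rw [← re_inner_wordConj_adjoint_comp_self, hA, wordConj_sub, wordConj_succ]
  simp

theorem tendsto_re_inner_wordConj_one {F : Type*} [NormedAddCommGroup F] {A : H →L[ℂ] E}
    (hA : adjoint A ∘L A = 1 - ∑ i, T i * adjoint (T i)) (h : H)
    (x : lp (fun _ : List (Fin n) => F) 2) (hx : ∀ α, ‖x α‖ = ‖A (adjoint (wordProd T α) h)‖) :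
    Tendsto (fun k => re ⟪wordConj T k 1 h, h⟫_ℂ) atTop (nhds (‖h‖ ^ 2 - ‖x‖ ^ 2)) := by
  have hsum := lp.hasSum_sum_norm_sq_ofFn x
  simp only [hx, ← re_inner_wordConj_one_sub_succ T hA] at hsum
  have htel := hsum.tendsto_sum_nat
  rw [funext fun N => Finset.sum_range_sub' _ N, wordConj_zero, one_apply_eq_self,
    inner_self_eq_norm_sq] at htel
  exact ((tendsto_const_nhds (x := ‖h‖ ^ 2)).sub htel).congr fun k => sub_sub_cancel _ _

end

/-- `F²(Hₙ) ⊗ D_T` is realized as `ℓ²(𝔽ₙ⁺, D_T)`, words being lists over `Fin n`, and the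
Poisson kernel is the operator `K` with coordinates `(K h) α = Δ_T T_α* h`. -/
theorem pure_iff_poisson_kernel_isometry
    {H : Type*} [NormedAddCommGroup H] [InnerProductSpace ℂ H] [CompleteSpace H]
    {n : ℕ} (T : Fin n → H →L[ℂ] H)
    (hrow : (1 - ∑ i, T i * adjoint (T i)).IsPositive)
    (Δ : H →L[ℂ] H) (hΔpos : Δ.IsPositive)
    (hΔ : Δ * Δ = 1 - ∑ i, T i * adjoint (T i)) :
    letI D : Submodule ℂ H := (LinearMap.range Δ.toLinearMap).topologicalClosure
    letI : CompleteSpace D :=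
      (LinearMap.range Δ.toLinearMap).isClosed_topologicalClosure.completeSpace_coe
    ∀ K : H →L[ℂ] lp (fun _ : List (Fin n) => D) 2,
      (∀ (h : H) (α : List (Fin n)),
        ((K h : lp (fun _ : List (Fin n) => D) 2) α : H)
          = Δ (adjoint (wordProd T α) h)) →
      ((∀ h : H, Tendsto
          (fun k : ℕ => (∑ f : Fin k → Fin n,
            wordProd T (List.ofFn f) * adjoint (wordProd T (List.ofFn f))) h)
          atTop (nhds 0))
        ↔ Isometry K) := by
  intro K hK
  have hQ (k : ℕ) : ∑ f : Fin k → Fin n,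
      wordProd T (List.ofFn f) * adjoint (wordProd T (List.ofFn f)) = wordConj T k 1 := by
    simp [wordConj]
  have hΔΔ : adjoint Δ ∘L Δ = 1 - ∑ i, T i * adjoint (T i) := by
    rwa [hΔpos.isSelfAdjoint.adjoint_eq]
  simp_rw [hQ, AddMonoidHomClass.isometry_iff_norm]
  refine forall_congr' fun h => ?_
  have hlim := tendsto_re_inner_wordConj_one T hΔΔ h (K h) fun α => by
    rw [Submodule.coe_norm, hK]
  rw [tendsto_apply_nhds_zero_iff_re_inner (fun k => wordConj_nonneg T k zero_le_one)
    (wordConj_one_le_one T ((le_def _ _).2 hrow)) h]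
  constructor
  · intro hre
    have hsq : ‖h‖ ^ 2 - ‖K h‖ ^ 2 = 0 := tendsto_nhds_unique hlim hre
    exact (sq_eq_sq₀ (norm_nonneg _) (norm_nonneg _)).1 (by linarith)
  · intro hnorm
    simpa [hnorm] using hlim
end

section
/- For a row contraction T, the Poisson kernel K_T intertwines: K_T T_α* = (S_α* ⊗ I) K_T for every word α ∈ 𝔽ₙ⁺, where S₁,…,Sₙ are the left creation operators on the full Fock space. -/
open ContinuousLinearMap Filter

/-- The Poisson kernel intertwines: `K_T T_α* = (S_α* ⊗ I) K_T`.
Here `F²(Hₙ) ⊗ D_T` is realized as `ℓ²(𝔽ₙ⁺, D_T)`; the Poisson kernel `K` has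
coordinates `(K h) β = Δ_T T_β* h`, and `S_α* ⊗ I` is the operator `A` removing the
prefix `α`, i.e. `(A ξ) β = ξ (α ++ β)`. -/
theorem poisson_kernel_intertwines
    {H : Type*} [NormedAddCommGroup H] [InnerProductSpace ℂ H] [CompleteSpace H]
    {n : ℕ} (T : Fin n → H →L[ℂ] H)
    (hrow : (1 - ∑ i, T i * adjoint (T i)).IsPositive)
    (Δ : H →L[ℂ] H) (hΔpos : Δ.IsPositive)
    (hΔ : Δ * Δ = 1 - ∑ i, T i * adjoint (T i)) :
    letI D : Submodule ℂ H := (LinearMap.range Δ.toLinearMap).topologicalClosure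
    letI : CompleteSpace D :=
      (LinearMap.range Δ.toLinearMap).isClosed_topologicalClosure.completeSpace_coe
    ∀ K : H →L[ℂ] lp (fun _ : List (Fin n) => D) 2,
      (∀ (h : H) (β : List (Fin n)),
        ((K h : lp (fun _ : List (Fin n) => D) 2) β : H)
          = Δ (adjoint (wordProd T β) h)) →
      ∀ (α : List (Fin n))
        (A : lp (fun _ : List (Fin n) => D) 2 →L[ℂ] lp (fun _ : List (Fin n) => D) 2),
        (∀ (ξ : lp (fun _ : List (Fin n) => D) 2) (β : List (Fin n)),
          (A ξ : lp (fun _ : List (Fin n) => D) 2) β = ξ (α ++ β)) →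
        K ∘L adjoint (wordProd T α) = A ∘L K := by
  intro K hK α A hA
  ext h β
  simp only [ContinuousLinearMap.comp_apply]
  rw [hA, hK, hK]
  congr 1
  have : wordProd T (α ++ β) = wordProd T α * wordProd T β := by
    simp [wordProd, List.map_append, List.prod_append]
  rw [this]
  simp [ContinuousLinearMap.adjoint_comp, mul_def]
end
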